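/- Let β_1,…,β_n be a distinguished T-action datum in V, let 1 ≤ j < k ≤ n and f_{j+1},…,f_{k−1} ∈ ℂ, and let f ∈ ℂ^n be the vector with f_j = f_k = −1, entries f_{j+1},…,f_{k−1} at positions j+1,…,k−1, and all other entries 0. Define η_j = γ_j and η_l = s_{γ_l}(η_{l−1}) − f_l γ_l for l = j+1,…,k−1; each η_l lies in the span of the distinct values of γ, and for such an element η and γ among the distinct values, [η:γ] denotes the coefficient of γ in the unique expansion of η in the distinct values of γ. If Σ_{l=1}^n f_l β_l = 0, then [η_l:γ_l] = 0 for every l ∈ [j,k−1] with l⁺ > k, and f = Σ_{l=j}^{k−1} [η_l:γ_l] θ^{(l)}. -/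

import Mathlib

open Finset Matrix

noncomputable section

/-- The standard embedding of an integer vector into `ℂⁿ`. -/
def cvec {n : ℕ} (w : Fin n → ℤ) : Fin n → ℂ := fun j => (w j : ℂ)

/-- `J_w = { j : w_j = -1 }`. -/
def Jset {n : ℕ} (w : Fin n → ℤ) : Finset (Fin n) :=
  Finset.univ.filter (fun j => w j = -1)

/-- The linear map `β : ℂⁿ → V`, `w ↦ ∑ w_j β_j`. -/
def bmap {n : ℕ} {V : Type*} [AddCommGroup V] [Module ℂ V]
    (β : Fin n → V) (w : Fin n → ℂ) : V :=
  ∑ j, w j • β j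

/-- The pair `(λ, β)` is T-log-symplectic. -/
def TLogSymp {n : ℕ} {V : Type*} [AddCommGroup V] [Module ℂ V]
    (M : Matrix (Fin n) (Fin n) ℂ) (β : Fin n → V) : Prop :=
  ∀ w : Fin n → ℂ, M.mulVec w = 0 → bmap β w = 0 → w = 0

/-- The set `W(λ, β)`. -/
def Wset {n : ℕ} {V : Type*} [AddCommGroup V] [Module ℂ V]
    (M : Matrix (Fin n) (Fin n) ℂ) (β : Fin n → V) : Set (Fin n → ℤ) :=
  {w | (∀ j, -1 ≤ w j) ∧ (∀ j, j ∉ Jset w → M.mulVec (cvec w) j = 0) ∧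
    bmap β (cvec w) = 0}

/-- The set `S(λ, β)` of smoothable weights. -/
def Sset {n : ℕ} {V : Type*} [AddCommGroup V] [Module ℂ V]
    (M : Matrix (Fin n) (Fin n) ℂ) (β : Fin n → V) : Set (Fin n → ℤ) :=
  {θ | θ ∈ Wset M β ∧ (Jset θ).card = 2}

/-- `S_m`: sums of exactly `m` elements of `S`, repetitions allowed. -/
def SumOf {n : ℕ} (S : Set (Fin n → ℤ)) (m : ℕ) : Set (Fin n → ℤ) :=
  {w | ∃ l : Multiset (Fin n → ℤ), (∀ x ∈ l, x ∈ S) ∧ Multiset.card l = m ∧ l.sum = w}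

/-- `S_{≥ m}`: sums of at least `m` elements of `S`, repetitions allowed. -/
def SumGE {n : ℕ} (S : Set (Fin n → ℤ)) (m : ℕ) : Set (Fin n → ℤ) :=
  {w | ∃ m', m ≤ m' ∧ w ∈ SumOf S m'}

/-- A vector `w ∈ ℤⁿ` is negatively bordered. -/
def NegBordered {n : ℕ} (w : Fin n → ℤ) : Prop :=
  ∃ j k : Fin n, j < k ∧ w j = -1 ∧ w k = -1 ∧ (∀ i, i < j → w i = 0) ∧
    (∀ i, k < i → w i = 0) ∧ (∀ i, j < i → i < k → 0 ≤ w i)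

/-- The Cartan number `a_{b,ξ} = 2⟨b,ξ⟩/⟨b,b⟩`. -/
def cartan {V : Type*} [AddCommGroup V] [Module ℂ V]
    (B : V →ₗ[ℂ] V →ₗ[ℂ] ℂ) (b ξ : V) : ℂ :=
  2 * B b ξ / B b b

/-- The reflection `s_b(ξ) = ξ - a_{b,ξ} b`. -/
def sRefl {V : Type*} [AddCommGroup V] [Module ℂ V]
    (B : V →ₗ[ℂ] V →ₗ[ℂ] ℂ) (b ξ : V) : V :=
  ξ - cartan B b ξ • b

/-- `reflL B g m = s_{g 0} ∘ s_{g 1} ∘ ⋯ ∘ s_{g (m-1)}`. -/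
def reflL {V : Type*} [AddCommGroup V] [Module ℂ V]
    (B : V →ₗ[ℂ] V →ₗ[ℂ] ℂ) (g : ℕ → V) : ℕ → V → V
  | 0, ξ => ξ
  | m + 1, ξ => reflL B g m (sRefl B (g m) ξ)

/-- `reflR B g m = s_{g (m-1)} ∘ ⋯ ∘ s_{g 1} ∘ s_{g 0}`. -/
def reflR {V : Type*} [AddCommGroup V] [Module ℂ V]
    (B : V →ₗ[ℂ] V →ₗ[ℂ] ℂ) (g : ℕ → V) : ℕ → V → V
  | 0, ξ => ξ
  | m + 1, ξ => sRefl B (g m) (reflR B g m ξ)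

/-- Extension of a `Fin n`-indexed family to `ℕ` by zero. -/
def gext {n : ℕ} {V : Type*} [AddCommGroup V] (v : Fin n → V) : ℕ → V :=
  fun t => if h : t < n then v ⟨t, h⟩ else 0

/-- `γ_j = s_{β_1} s_{β_2} ⋯ s_{β_{j-1}} (β_j)`. -/
def gam {n : ℕ} {V : Type*} [AddCommGroup V] [Module ℂ V]
    (B : V →ₗ[ℂ] V →ₗ[ℂ] ℂ) (β : Fin n → V) (j : Fin n) : V :=
  reflL B (gext β) j.val (β j)

/-- The Poisson coefficient matrix `λ` of a T-action datum: `λ_{jk} = -⟨β_j, β_k⟩` for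
`j < k`, `⟨β_j, β_k⟩` for `j > k`, and `0` on the diagonal. -/
def lam {n : ℕ} {V : Type*} [AddCommGroup V] [Module ℂ V]
    (B : V →ₗ[ℂ] V →ₗ[ℂ] ℂ) (β : Fin n → V) : Matrix (Fin n) (Fin n) ℂ :=
  Matrix.of fun j k =>
    if j < k then -(B (β j) (β k)) else if k < j then B (β j) (β k) else 0

/-- The upper triangular matrix `Q` with `Q_{jj} = 1` and `Q_{jk} = a_{γ_j, γ_k}` for
`j < k`. -/
def Qmat {n : ℕ} {V : Type*} [AddCommGroup V] [Module ℂ V]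
    (B : V →ₗ[ℂ] V →ₗ[ℂ] ℂ) (γ : Fin n → V) : Matrix (Fin n) (Fin n) ℂ :=
  Matrix.of fun j k => if j = k then 1 else if j < k then cartan B (γ j) (γ k) else 0

open scoped Classical in
/-- The set `{k ∈ [j+1, n] : γ_k = γ_j}`, whose minimum (when it exists) is `j⁺`. -/
def plusSet {n : ℕ} {V : Type*} (γ : Fin n → V) (j : Fin n) : Finset (Fin n) :=
  Finset.univ.filter (fun k => j < k ∧ γ k = γ j)

/-- `e_{j⁺} ∈ ℂⁿ`, with the convention `e_{+∞} = 0`. -/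
def eplus {n : ℕ} {V : Type*} (γ : Fin n → V) (j : Fin n) : Fin n → ℂ :=
  if h : (plusSet γ j).Nonempty then Pi.single ((plusSet γ j).min' h) 1 else 0

/-- `θ^{(j)} = Q (e_j - e_{j⁺}) ∈ ℂⁿ`. -/
def thetaC {n : ℕ} {V : Type*} [AddCommGroup V] [Module ℂ V]
    (B : V →ₗ[ℂ] V →ₗ[ℂ] ℂ) (β : Fin n → V) (j : Fin n) : Fin n → ℂ :=
  (Qmat B (gam B β)).mulVec ((Pi.single j 1 : Fin n → ℂ) - eplus (gam B β) j)

/-- The linear map `β : ℂⁿ → V`, `w ↦ ∑ w_j β_j`, as a bundled linear map. -/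
def betaLin {n : ℕ} {V : Type*} [AddCommGroup V] [Module ℂ V]
    (β : Fin n → V) : (Fin n → ℂ) →ₗ[ℂ] V where
  toFun w := ∑ j, w j • β j
  map_add' x y := by simp [add_smul, Finset.sum_add_distrib]
  map_smul' a x := by simp [Finset.smul_sum, smul_smul]

/-!
With `Q` the unitriangular matrix of the statement and `L_t = s_{γ_1} ⋯ s_{γ_{t-1}}`, one has
`β_t = L_t γ_t`, because `s_{β_1} ⋯ s_{β_t} = s_{γ_t} ⋯ s_{γ_1}` (conjugating a reflection by an
isometry). The identity `s_{γ_t}(∑_{s>t} w_s γ_s) = ∑_{s≥t} w_s γ_s - (Qw)_t γ_t`, transported by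
the words `L_t`, telescopes to `∑_t (Qw)_t β_t = ∑_t w_t γ_t` for every `w ∈ ℂⁿ`.

Let `Qv = f`. Then `∑ v_t γ_t = ∑ f_t β_t = 0`, so every fibre sum of `v` over a value of `γ`
vanishes, and back-substitution in the triangular system, together with this relation, shows
that `v` is supported on `[j, k]` with `v_j = 1`. The same identity gives
`η_l = -∑_{t>l} v_t γ_t` by induction on `l`, so `[η_l : γ_l]` is minus the sum of `v` over the
indices `t > l` of the fibre of `γ_l`: it vanishes if that fibre has no index in `(l, k]`, and it
equals the partial fibre sum over `t ≤ l`. Partial fibre sums against `e_l - e_{l⁺}` add up to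
`v`, and applying `Q` gives `f = ∑_l [η_l : γ_l] θ^{(l)}`.
-/

theorem sum_Ioi_eq_neg_of_sum_eq_zero {ι M : Type*} [Fintype ι] [LinearOrder ι]
    [LocallyFiniteOrderTop ι] [AddCommGroup M] {x : ι → M} (hx : ∑ t, x t = 0) {i : ι}
    (hlt : ∀ t < i, x t = 0) : ∑ t ∈ Ioi i, x t = -x i := by
  rw [eq_neg_iff_add_eq_zero, add_comm, add_sum_Ioi_eq_sum_Ici, ← hx]
  exact sum_subset (subset_univ _) fun t _ ht => hlt t (by simpa using ht)

open scoped Classical in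
theorem sum_fiber_eq_zero_of_linearIndependent {ι R M : Type*} [Fintype ι] [Ring R]
    [AddCommGroup M] [Module R M] {γ : ι → M}
    (hγ : LinearIndependent R (fun v : Set.range γ => (v : M))) {x : ι → R}
    (hx : ∑ t, x t • γ t = 0) (i : ι) : ∑ t with γ t = γ i, x t = 0 := by
  let r : ι → Set.range γ := fun t => ⟨γ t, t, rfl⟩
  have hfib : ∑ u : Set.range γ, (∑ t with r t = u, x t) • (u : M) = 0 := by
    rw [← hx, ← sum_fiberwise univ r fun t => x t • γ t]
    refine sum_congr rfl fun u _ => ?_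
    rw [sum_smul]
    exact sum_congr rfl fun t ht => by rw [← (mem_filter.mp ht).2]
  simpa [r, Subtype.ext_iff] using Fintype.linearIndependent_iff.mp hγ _ hfib (r i)

theorem sum_filter_le_add_sum_filter_lt {ι M : Type*} [Fintype ι] [LinearOrder ι]
    [AddCommMonoid M] (p : ι → Prop) [DecidablePred p] (v : ι → M) (l : ι) :
    ∑ t with p t ∧ t ≤ l, v t + ∑ t with p t ∧ l < t, v t = ∑ t with p t, v t := by
  rw [← sum_filter_add_sum_filter_not (univ.filter p) (· ≤ l), filter_filter, filter_filter]
  simp only [not_le]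

open scoped Classical in
theorem sum_fiber_eq_neg_sum_fiber_Ioi {n : ℕ} {V : Type*} [AddCommGroup V] [Module ℂ V]
    {γ : Fin n → V} (hγ : LinearIndependent ℂ (fun v : Set.range γ => (v : V)))
    {c v : Fin n → ℂ} {l : Fin n} (h : ∑ t, c t • γ t = -∑ t ∈ Ioi l, v t • γ t) (i : Fin n) :
    ∑ t with γ t = γ i, c t = -∑ t with γ t = γ i ∧ l < t, v t := by
  have hx : ∑ t, (c t + if l < t then v t else 0) • γ t = 0 := by
    simp [add_smul, sum_add_distrib, h, ite_smul, ← sum_filter, filter_lt_eq_Ioi]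
  have := sum_fiber_eq_zero_of_linearIndependent hγ hx i
  rwa [sum_add_distrib, ← sum_filter, filter_filter, ← eq_neg_iff_add_eq_zero] at this

section Reflection

variable {V : Type*} [AddCommGroup V] [Module ℂ V] (B : V →ₗ[ℂ] V →ₗ[ℂ] ℂ)

def sReflₗ (b : V) : V →ₗ[ℂ] V :=
  LinearMap.id - ((2 / B b b) • B b).smulRight b

@[simp]
theorem sReflₗ_apply (b ξ : V) : sReflₗ B b ξ = sRefl B b ξ := by
  simp [sReflₗ, sRefl, cartan, div_mul_eq_mul_div]

theorem sRefl_self {b : V} (hb : B b b ≠ 0) : sRefl B b b = -b := by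
  rw [sRefl, cartan, mul_div_assoc, div_self hb]
  module

theorem sRefl_sRefl (b ξ : V) : sRefl B b (sRefl B b ξ) = ξ := by
  by_cases hb : B b b = 0
  -- then `cartan B b = 0` (division by zero), so `sRefl B b` is the identity
  · simp [sRefl, cartan, hb]
  calc sRefl B b (sRefl B b ξ) = sReflₗ B b (ξ - cartan B b ξ • b) := by rw [sReflₗ_apply]; rfl
    _ = sRefl B b ξ - cartan B b ξ • sRefl B b b := by simp only [map_sub, map_smul, sReflₗ_apply]
    _ = ξ := by rw [sRefl_self B hb, sRefl]; module

theorem sRefl_isOrthogonal (hB : ∀ x y, B x y = B y x) (b : V) :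
    B.IsOrthogonal (sRefl B b) := by
  intro x y
  by_cases hb : B b b = 0
  · simp [sRefl, cartan, hb]
  simp only [sRefl, cartan, map_sub, map_smul, LinearMap.sub_apply, LinearMap.smul_apply,
    smul_eq_mul]
  rw [hB x b]
  field_simp
  ring

theorem map_sRefl_of_isOrthogonal {φ : V →ₗ[ℂ] V} (hφ : B.IsOrthogonal φ) (b ξ : V) :
    φ (sRefl B b ξ) = sRefl B (φ b) (φ ξ) := by
  rw [sRefl, sRefl, cartan, cartan, hφ, hφ, map_sub, map_smul]

def reflLₗ (g : ℕ → V) : ℕ → V →ₗ[ℂ] V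
  | 0 => LinearMap.id
  | m + 1 => reflLₗ g m ∘ₗ sReflₗ B (g m)

@[simp]
theorem reflLₗ_apply (g : ℕ → V) (m : ℕ) (ξ : V) : reflLₗ B g m ξ = reflL B g m ξ := by
  induction m generalizing ξ <;> simp [reflLₗ, reflL, *]

theorem reflL_isOrthogonal (hB : ∀ x y, B x y = B y x) (g : ℕ → V) (m : ℕ) :
    B.IsOrthogonal (reflL B g m) := by
  induction m with
  | zero => exact fun _ _ => rfl
  | succ m ih => exact fun x y => by rw [reflL, reflL, ih, sRefl_isOrthogonal B hB]

end Reflection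

section Gam

variable {n : ℕ} {V : Type*} [AddCommGroup V] [Module ℂ V] (B : V →ₗ[ℂ] V →ₗ[ℂ] ℂ)
  (hB : ∀ x y, B x y = B y x) (β : Fin n → V)
include hB

theorem reflL_gext_succ (t : Fin n) (ξ : V) :
    reflL B (gext β) (t + 1) ξ = sRefl B (gam B β t) (reflL B (gext β) t ξ) := by
  have hφ : B.IsOrthogonal (reflLₗ B (gext β) t) := fun x y => by
    simpa using reflL_isOrthogonal B hB (gext β) t x y
  rw [reflL]
  simpa [gext, gam] using map_sRefl_of_isOrthogonal B hφ (gext β t) ξ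

theorem reflL_gam_reflL (m : ℕ) (hm : m ≤ n) (ξ : V) :
    reflL B (gext (gam B β)) m (reflL B (gext β) m ξ) = ξ := by
  induction m generalizing ξ with
  | zero => rfl
  | succ m ih =>
    have hsucc := reflL_gext_succ B hB β ⟨m, hm⟩ ξ
    simp only at hsucc
    have hγm : gext (gam B β) m = gam B β ⟨m, hm⟩ := dif_pos hm
    rw [hsucc, reflL, hγm, sRefl_sRefl, ih (by omega)]

theorem reflL_gam_gam (t : Fin n) : reflL B (gext (gam B β)) t (gam B β t) = β t :=
  reflL_gam_reflL B hB β t t.2.le (β t)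

theorem apply_gam_gam (t : Fin n) : B (gam B β t) (gam B β t) = B (β t) (β t) :=
  reflL_isOrthogonal B hB (gext β) t (β t) (β t)

end Gam

section Qmat

variable {n : ℕ} {V : Type*} [AddCommGroup V] [Module ℂ V] (B : V →ₗ[ℂ] V →ₗ[ℂ] ℂ)
  (γ : Fin n → V)

theorem Qmat_isUpperTriangular : (Qmat B γ).IsUpperTriangular := fun i t hti => by
  simp only [id] at hti
  simp [Qmat, hti.ne', hti.not_gt]

theorem exists_Qmat_mulVec_eq (f : Fin n → ℂ) : ∃ w, Qmat B γ *ᵥ w = f := by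
  refine mulVec_surjective_iff_isUnit.mpr ((isUnit_iff_isUnit_det _).mpr ?_) f
  rw [det_of_isUpperTriangular (Qmat_isUpperTriangular B γ)]
  simp [Qmat]

theorem Qmat_mulVec_apply (w : Fin n → ℂ) (i : Fin n) :
    (Qmat B γ *ᵥ w) i = w i + ∑ t ∈ Ioi i, cartan B (γ i) (γ t) * w t := by
  simp only [mulVec, dotProduct, Qmat, of_apply, ite_mul, one_mul, zero_mul, sum_ite,
    sum_const_zero, add_zero, filter_filter, filter_eq, mem_univ, if_true, sum_singleton]
  congr 1
  apply sum_congr _ fun _ _ => rfl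
  ext t
  simp only [mem_filter, mem_univ, true_and, mem_Ioi, and_iff_right_iff_imp]
  exact fun h => h.ne

theorem sRefl_sum_Ioi (w : Fin n → ℂ) (l : Fin n) :
    sRefl B (γ l) (∑ t ∈ Ioi l, w t • γ t)
      = ∑ t ∈ Ici l, w t • γ t - (Qmat B γ *ᵥ w) l • γ l := by
  rw [← sReflₗ_apply, map_sum, Qmat_mulVec_apply, ← add_sum_Ioi_eq_sum_Ici]
  simp only [map_smul, sReflₗ_apply, sRefl, smul_sub, sum_sub_distrib, add_smul, sum_smul,
    smul_smul, mul_comm (w _)]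
  abel

theorem sRefl_sum_Ici {l : Fin n} (hl : B (γ l) (γ l) ≠ 0) (w : Fin n → ℂ) :
    sRefl B (γ l) (∑ t ∈ Ici l, w t • γ t)
      = ∑ t ∈ Ioi l, w t • γ t - (Qmat B γ *ᵥ w) l • γ l := by
  have h := congrArg (sReflₗ B (γ l)) (sRefl_sum_Ioi B γ w l)
  simp only [map_sub, map_smul, sReflₗ_apply, sRefl_sRefl, sRefl_self B hl] at h
  rw [h]
  module

theorem sum_Qmat_mulVec_smul_reflL (w : Fin n → ℂ) :
    ∑ t, (Qmat B γ *ᵥ w) t • reflL B (gext γ) t (γ t) = ∑ t, w t • γ t := by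
  -- `F m = s_{γ 0} ⋯ s_{γ (m-1)} (∑_{t ≥ m} w t • γ t)`; the sum telescopes from `F 0` to `F n = 0`
  set F : ℕ → V := fun m => reflL B (gext γ) m (∑ t : Fin n with m ≤ t.val, w t • γ t)
  have hstep (t : Fin n) : F t - F (t + 1) = (Qmat B γ *ᵥ w) t • reflL B (gext γ) t (γ t) := by
    have hIoi : ({s | (t : ℕ) + 1 ≤ s} : Finset (Fin n)) = Ioi t := by
      ext s; simp only [mem_filter, mem_univ, true_and, mem_Ioi, Fin.lt_def]; omega
    have hIci : ({s | (t : ℕ) ≤ s} : Finset (Fin n)) = Ici t := by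
      ext s; simp only [mem_filter, mem_univ, true_and, mem_Ici, Fin.le_def]
    simp only [F, reflL, hIoi, hIci, show gext γ t = γ t from dif_pos t.2]
    rw [sRefl_sum_Ioi]
    simp only [← reflLₗ_apply, map_sub, map_smul]
    abel
  have hF0 : F 0 = ∑ t, w t • γ t := by simp [F, reflL]
  have hFn : F n = 0 := by
    simp [F, ← reflLₗ_apply, filter_eq_empty_iff.mpr fun (t : Fin n) _ => not_le.mpr t.2]
  calc ∑ t, (Qmat B γ *ᵥ w) t • reflL B (gext γ) t (γ t)
      = ∑ m ∈ range n, (F m - F (m + 1)) := by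
        simp only [← hstep]; exact Fin.sum_univ_eq_sum_range (fun m => F m - F (m + 1)) n
    _ = ∑ t, w t • γ t := by rw [sum_range_sub', hF0, hFn, sub_zero]

theorem Qmat_mulVec_apply_of_forall_gt {w : Fin n → ℂ} {i : Fin n}
    (hw : ∀ t, i < t → w t = 0) : (Qmat B γ *ᵥ w) i = w i := by
  rw [Qmat_mulVec_apply, sum_eq_zero fun t ht => by rw [hw t (mem_Ioi.mp ht), mul_zero],
    add_zero]

theorem forall_gt_eq_zero_of_Qmat_mulVec {w : Fin n → ℂ} {k : Fin n}
    (hw : ∀ i, k < i → (Qmat B γ *ᵥ w) i = 0) : ∀ i, k < i → w i = 0 := by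
  intro i
  induction i using WellFoundedGT.induction with
  | _ i ih =>
    intro hki
    rw [← Qmat_mulVec_apply_of_forall_gt B γ fun t hit => ih t hit (hki.trans hit)]
    exact hw i hki

-- `∑_{t>i} a_{γ i, γ t} w t = a_{γ i}(∑_{t>i} w t • γ t) = a_{γ i}(-w i • γ i) = -2 w i`
theorem Qmat_mulVec_apply_of_sum_smul_eq_zero {w : Fin n → ℂ} (hw : ∑ t, w t • γ t = 0)
    {i : Fin n} (hi : B (γ i) (γ i) ≠ 0) (hlt : ∀ t < i, w t = 0) :
    (Qmat B γ *ᵥ w) i = -w i := by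
  have htail := congrArg (B (γ i))
    (sum_Ioi_eq_neg_of_sum_eq_zero hw fun t ht => by rw [hlt t ht, zero_smul])
  simp only [map_sum, map_neg, map_smul, smul_eq_mul] at htail
  calc (Qmat B γ *ᵥ w) i
      = w i + 2 * (∑ t ∈ Ioi i, w t * B (γ i) (γ t)) / B (γ i) (γ i) := by
        simp only [Qmat_mulVec_apply, cartan, mul_sum, sum_div]
        exact congrArg _ (sum_congr rfl fun t _ => by ring)
    _ = -w i := by
        rw [htail]
        field_simp
        ring

theorem eq_neg_Qmat_mulVec_of_sum_smul_eq_zero (hγ : ∀ i, B (γ i) (γ i) ≠ 0)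
    {w : Fin n → ℂ} (hw : ∑ t, w t • γ t = 0) {j : Fin n}
    (hj : ∀ i < j, (Qmat B γ *ᵥ w) i = 0) : ∀ i ≤ j, w i = -(Qmat B γ *ᵥ w) i := by
  intro i
  induction i using WellFoundedLT.induction with
  | _ i ih =>
    intro hij
    have hlt (t) (hti : t < i) : w t = 0 := by
      rw [ih t hti (hti.le.trans hij), hj t (hti.trans_le hij), neg_zero]
    rw [Qmat_mulVec_apply_of_sum_smul_eq_zero B γ hw (hγ i) hlt, neg_neg]

end Qmat

theorem sum_Qmat_mulVec_smul_eq {n : ℕ} {V : Type*} [AddCommGroup V] [Module ℂ V]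
    (B : V →ₗ[ℂ] V →ₗ[ℂ] ℂ) (hB : ∀ x y, B x y = B y x) (β : Fin n → V) (w : Fin n → ℂ) :
    ∑ t, (Qmat B (gam B β) *ᵥ w) t • β t = ∑ t, w t • gam B β t := by
  simpa only [reflL_gam_gam B hB β] using sum_Qmat_mulVec_smul_reflL B (gam B β) w

section NextOccurrence

variable {n : ℕ} {X : Type*} (γ : Fin n → X)

open scoped Classical in
theorem eplus_apply (l m : Fin n) :
    eplus γ l m = if IsLeast (plusSet γ l : Set (Fin n)) m then 1 else 0 := by
  unfold eplus
  split_ifs with hne hm hm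
  · rw [Pi.single_apply, if_pos (hm.unique (isLeast_min' _ hne))]
  · rw [Pi.single_apply, if_neg fun h : m = _ => hm (h ▸ isLeast_min' _ hne)]
  · exact absurd ⟨m, hm.1⟩ hne
  · rfl

open scoped Classical in
theorem isLeast_plusSet_iff (l m : Fin n) :
    IsLeast (plusSet γ l : Set (Fin n)) m ↔ IsGreatest {t | t < m ∧ γ t = γ m} l := by
  simp only [IsLeast, IsGreatest, lowerBounds, upperBounds, plusSet, coe_filter, mem_univ,
    true_and, Set.mem_ofPred_eq, and_imp]
  constructor
  · rintro ⟨⟨hlm, hml⟩, hmin⟩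
    exact ⟨⟨hlm, hml.symm⟩, fun t htm htl => le_of_not_gt fun hlt =>
      (hmin hlt (htl.trans hml)).not_gt htm⟩
  · rintro ⟨⟨hlm, hlm'⟩, hmax⟩
    exact ⟨⟨hlm, hlm'.symm⟩, fun t hlt htl => le_of_not_gt fun htm =>
      (hmax htm (htl.trans hlm')).not_gt hlt⟩

open scoped Classical in
theorem sum_fiber_Iic_smul_sub_eplus (v : Fin n → ℂ) :
    ∑ l, (∑ t with γ t = γ l ∧ t ≤ l, v t) • (Pi.single l 1 - eplus γ l) = v := by
  funext m
  set P : Finset (Fin n) := {t | t < m ∧ γ t = γ m}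
  have hpred : ∑ l, (∑ t with γ t = γ l ∧ t ≤ l, v t) * eplus γ l m = ∑ t ∈ P, v t := by
    simp only [eplus_apply, isLeast_plusSet_iff, mul_ite, mul_one, mul_zero]
    by_cases hP : P.Nonempty
    · have hmax : IsGreatest {t | t < m ∧ γ t = γ m} (P.max' hP) := by
        simpa [P] using isGreatest_max' P hP
      simp only [fun l => (⟨fun h => h.unique hmax, fun h : l = P.max' hP => h ▸ hmax⟩ :
        IsGreatest {t | t < m ∧ γ t = γ m} l ↔ l = P.max' hP), sum_ite_eq', mem_univ, if_true]
      refine sum_congr (ext fun t => ?_) fun _ _ => rfl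
      simp only [P, mem_filter, mem_univ, true_and]
      constructor
      · rintro ⟨hγt, htp⟩
        exact ⟨htp.trans_lt hmax.1.1, hγt.trans hmax.1.2⟩
      · exact fun ht => ⟨ht.2.trans hmax.1.2.symm, hmax.2 ht⟩
    · rw [not_nonempty_iff_eq_empty.mp hP, sum_empty]
      exact sum_eq_zero fun l _ => if_neg fun h => hP ⟨l, by simpa [P] using h.1⟩
  have hIic : ∑ t with γ t = γ m ∧ t ≤ m, v t = v m + ∑ t ∈ P, v t := by
    rw [← add_sum_erase _ _ (by simp : m ∈ _)]
    congr 2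
    ext t
    simp only [P, mem_erase, mem_filter, mem_univ, true_and, lt_iff_le_and_ne]
    tauto
  simp [Finset.sum_apply, mul_sub, sum_sub_distrib, Pi.single_apply, hpred, hIic]

open scoped Classical in
theorem sum_fiber_Ioi_smul_sub_eplus {v : Fin n → ℂ} (hfib : ∀ i, ∑ t with γ t = γ i, v t = 0)
    {j k : Fin n} (hlt : ∀ i < j, v i = 0) (hgt : ∀ i, k < i → v i = 0) :
    ∑ l with j ≤ l ∧ l < k,
      (-∑ t with γ t = γ l ∧ l < t, v t) • (Pi.single l 1 - eplus γ l) = v := by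
  have hpre (l) : ∑ t with γ t = γ l ∧ t ≤ l, v t = -∑ t with γ t = γ l ∧ l < t, v t :=
    eq_neg_of_add_eq_zero_left ((sum_filter_le_add_sum_filter_lt _ v l).trans (hfib l))
  calc _ = ∑ l with j ≤ l ∧ l < k,
        (∑ t with γ t = γ l ∧ t ≤ l, v t) • (Pi.single l 1 - eplus γ l) :=
        sum_congr rfl fun l _ => by rw [hpre]
    _ = v := by
      rw [sum_subset (subset_univ _) ?_, sum_fiber_Iic_smul_sub_eplus]
      intro l _ hl
      simp only [mem_filter, mem_univ, true_and, not_and_or, not_le, not_lt] at hl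
      rcases hl with hlj | hkl
      · rw [sum_eq_zero fun t ht => hlt t ((mem_filter.mp ht).2.2.trans_lt hlj), zero_smul]
      · rw [hpre, sum_eq_zero fun t ht => hgt t (hkl.trans_lt (mem_filter.mp ht).2.2),
          neg_zero, zero_smul]

end NextOccurrence

theorem eq_neg_sum_Ioi_of_sRefl_recursion {n : ℕ} {V : Type*} [AddCommGroup V] [Module ℂ V]
    (B : V →ₗ[ℂ] V →ₗ[ℂ] ℂ) (γ : Fin n → V) (hγ : ∀ i, B (γ i) (γ i) ≠ 0)
    {w f : Fin n → ℂ} (hw : Qmat B γ *ᵥ w = f) {η : Fin n → V} {j k : Fin n}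
    (hη0 : η j = -∑ t ∈ Ioi j, w t • γ t)
    (hrec : ∀ l m : Fin n, j < l → l < k → (m : ℕ) + 1 = (l : ℕ) →
      η l = sRefl B (γ l) (η m) - f l • γ l) :
    ∀ l, j ≤ l → l < k → η l = -∑ t ∈ Ioi l, w t • γ t := by
  suffices ∀ a : ℕ, (j : ℕ) ≤ a → ∀ ha : a < k,
      η ⟨a, ha.trans k.2⟩ = -∑ t ∈ Ioi ⟨a, ha.trans k.2⟩, w t • γ t from
    fun l hjl hlk => this l hjl hlk
  intro a hja
  induction a, hja using Nat.le_induction with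
  | base => exact fun _ => hη0
  | succ a hja ih =>
    intro ha
    set m : Fin n := ⟨a, by omega⟩
    set l : Fin n := ⟨a + 1, ha.trans k.2⟩
    have hIoi : Ioi m = Ici l := by
      ext t; simp only [mem_Ioi, mem_Ici, Fin.lt_def, Fin.le_def, m, l]; omega
    rw [hrec l m (Fin.lt_def.mpr (by simp only [l]; omega)) ha rfl, ih (by omega), hIoi,
      ← sReflₗ_apply, map_neg, sReflₗ_apply, sRefl_sum_Ici B γ (hγ l), hw]
    abel

open scoped Classical in
theorem stmt16_general (n : ℕ) {V : Type*} [AddCommGroup V] [Module ℂ V]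
    (B : V →ₗ[ℂ] V →ₗ[ℂ] ℂ) (hBsymm : ∀ x y, B x y = B y x)
    (β : Fin n → V) (hβ : ∀ j, B (β j) (β j) ≠ 0)
    (hdist : LinearIndependent ℂ (fun v : Set.range (gam B β) => (v : V)))
    (j k : Fin n) (f : Fin n → ℂ)
    (hfj : f j = -1) (hf0 : ∀ l, l < j ∨ k < l → f l = 0)
    (η : Fin n → V) (hη0 : η j = gam B β j)
    (hrec : ∀ l m : Fin n, j < l → l < k → (m : ℕ) + 1 = (l : ℕ) →
      η l = sRefl B (gam B β l) (η m) - f l • gam B β l)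
    (c : Fin n → Fin n → ℂ)
    (hc : ∀ l, j ≤ l → l < k → η l = ∑ t, c l t • gam B β t)
    (hsum : ∑ l, f l • β l = 0) :
    (∀ l : Fin n, j ≤ l → l < k →
      (∀ l', l < l' → l' ≤ k → gam B β l' ≠ gam B β l) →
      ∑ t ∈ Finset.univ.filter (fun t => gam B β t = gam B β l), c l t = 0) ∧
    f = ∑ l ∈ Finset.univ.filter (fun l => j ≤ l ∧ l < k),
      (∑ t ∈ Finset.univ.filter (fun t => gam B β t = gam B β l), c l t) •
        thetaC B β l := by
  set γ := gam B β
  have hγ (t : Fin n) : B (γ t) (γ t) ≠ 0 := (apply_gam_gam B hBsymm β t).trans_ne (hβ t)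
  obtain ⟨v, hv⟩ := exists_Qmat_mulVec_eq B γ f
  have hvγ : ∑ t, v t • γ t = 0 := by rw [← sum_Qmat_mulVec_smul_eq B hBsymm β, hv, hsum]
  have hv_le : ∀ i ≤ j, v i = -f i := by
    simpa only [hv] using eq_neg_Qmat_mulVec_of_sum_smul_eq_zero B γ hγ hvγ
      (by simpa only [hv] using fun i hij => hf0 i (Or.inl hij))
  have hv_lt (i) (hij : i < j) : v i = 0 := by rw [hv_le i hij.le, hf0 i (Or.inl hij), neg_zero]
  have hv_gt : ∀ i, k < i → v i = 0 :=
    forall_gt_eq_zero_of_Qmat_mulVec B γ (by simpa only [hv] using fun i hki => hf0 i (Or.inr hki))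
  have hη : ∀ l, j ≤ l → l < k → η l = -∑ t ∈ Ioi l, v t • γ t := by
    refine eq_neg_sum_Ioi_of_sRefl_recursion B γ hγ hv ?_ hrec
    rw [hη0, sum_Ioi_eq_neg_of_sum_eq_zero hvγ fun t ht => by rw [hv_lt t ht, zero_smul],
      hv_le j le_rfl, hfj]
    simp
  have hcoef (l) (hjl : j ≤ l) (hlk : l < k) :
      ∑ t with γ t = γ l, c l t = -∑ t with γ t = γ l ∧ l < t, v t :=
    sum_fiber_eq_neg_sum_fiber_Ioi hdist ((hc l hjl hlk).symm.trans (hη l hjl hlk)) l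
  refine ⟨fun l hjl hlk hnext => ?_, ?_⟩
  · rw [hcoef l hjl hlk, neg_eq_zero]
    refine sum_eq_zero fun t ht => hv_gt t (lt_of_not_ge fun htk => ?_)
    exact hnext t (mem_filter.mp ht).2.2 htk (mem_filter.mp ht).2.1
  calc f = Qmat B γ *ᵥ v := hv.symm
    _ = ∑ l with j ≤ l ∧ l < k, (-∑ t with γ t = γ l ∧ l < t, v t) • thetaC B β l := by
      conv_lhs =>
        rw [← sum_fiber_Ioi_smul_sub_eplus γ
          (sum_fiber_eq_zero_of_linearIndependent hdist hvγ) hv_lt hv_gt]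
      simp only [mulVec_sum, mulVec_smul, thetaC, γ]
    _ = _ := sum_congr rfl fun l hl => by
      rw [hcoef l (mem_filter.mp hl).2.1 (mem_filter.mp hl).2.2]

open scoped Classical in
theorem stmt16 (n : ℕ) (hn : 0 < n) {V : Type*} [AddCommGroup V] [Module ℂ V]
    (B : V →ₗ[ℂ] V →ₗ[ℂ] ℂ) (hBsymm : ∀ x y, B x y = B y x)
    (β : Fin n → V) (hβ : ∀ j, B (β j) (β j) ≠ 0)
    (hdist : LinearIndependent ℂ (fun v : Set.range (gam B β) => (v : V)))
    (j k : Fin n) (hjk : j < k) (f : Fin n → ℂ)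
    (hfj : f j = -1) (hfk : f k = -1) (hf0 : ∀ l, l < j ∨ k < l → f l = 0)
    (η : Fin n → V) (hη0 : η j = gam B β j)
    (hrec : ∀ l m : Fin n, j < l → l < k → (m : ℕ) + 1 = (l : ℕ) →
      η l = sRefl B (gam B β l) (η m) - f l • gam B β l)
    (c : Fin n → Fin n → ℂ)
    (hc : ∀ l, j ≤ l → l < k → η l = ∑ t, c l t • gam B β t)
    (hsum : ∑ l, f l • β l = 0) :
    (∀ l : Fin n, j ≤ l → l < k →
      (∀ l', l < l' → l' ≤ k → gam B β l' ≠ gam B β l) →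
      ∑ t ∈ Finset.univ.filter (fun t => gam B β t = gam B β l), c l t = 0) ∧
    f = ∑ l ∈ Finset.univ.filter (fun l => j ≤ l ∧ l < k),
      (∑ t ∈ Finset.univ.filter (fun t => gam B β t = gam B β l), c l t) •
        thetaC B β l :=
  stmt16_general n B hBsymm β hβ hdist j k f hfj hf0 η hη0 hrec c hc hsum
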